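/- arXiv:2107.01108 — 3 statements merged into one kernel-verified Lean document; each statement's English description precedes it below -/
import Mathlib

section
/- For every positive integer d there is a constant C = C(d) (one may take C = d) such that for every seminorm ‖·‖ on ℝ^d there exists a linear map A : ℝ^d → ℝ^d satisfying ‖v‖ ≤ |Av| ≤ C‖v‖ for all v ∈ ℝ^d, where |·| denotes the Euclidean norm. -/
open scoped ENNReal NNReal
open Set

noncomputable section

/-- Euclidean space `ℝ^d`. -/
abbrev Eucl (d : ℕ) := EuclideanSpace ℝ (Fin d)

/-- `ℓ^∞`, the Banach space of bounded real sequences with the sup norm. -/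
abbrev ellInfty := lp (fun _ : ℕ => ℝ) ⊤

/-- The unit cube `Q₀ = [0,1]^d ⊆ ℝ^d`. -/
def unitCube (d : ℕ) : Set (Eucl d) := {x | ∀ i, x i ∈ Set.Icc (0:ℝ) 1}

/-- The `k`-dimensional Hausdorff content: `inf Σ diam(U_i)^k` over countable
open covers of `A`. -/
def hContent (k : ℕ) {X : Type*} [PseudoEMetricSpace X] (A : Set X) : ℝ≥0∞ :=
  ⨅ (U : ℕ → Set X) (_ : A ⊆ ⋃ i, U i) (_ : ∀ i, IsOpen (U i)),
    ∑' i, EMetric.diam (U i) ^ k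

/-- The `k`-dimensional Hausdorff measure of a set, as a supremum over scales `δ`
of the infimum over countable covers by sets of diameter at most `δ`. -/
def hMeasure (k : ℕ) {X : Type*} [PseudoEMetricSpace X] (A : Set X) : ℝ≥0∞ :=
  ⨆ (δ : ℝ≥0∞) (_ : 0 < δ),
    ⨅ (U : ℕ → Set X) (_ : A ⊆ ⋃ i, U i) (_ : ∀ i, EMetric.diam (U i) ≤ δ),
      ∑' i, EMetric.diam (U i) ^ k

/-- A dyadic subcube of the unit cube `[0,1]^d`: side length `2⁻ʲ`, lower corner `z/2ʲ`. -/
structure DyadicCube (d : ℕ) where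
  j : ℕ
  z : Fin d → ℕ
  hz : ∀ i, z i < 2 ^ j

namespace DyadicCube

/-- The side length of a dyadic cube. -/
def side {d : ℕ} (Q : DyadicCube d) : ℝ := (2 : ℝ)⁻¹ ^ Q.j

/-- The closed cube in `ℝ^d` corresponding to the combinatorial data. -/
def toSet {d : ℕ} (Q : DyadicCube d) : Set (Eucl d) :=
  {x | ∀ i, (Q.z i : ℝ) * Q.side ≤ x i ∧ x i ≤ ((Q.z i : ℝ) + 1) * Q.side}

end DyadicCube

/-- The `(n,m)`-mapping content `ℋ^{n,m}_∞(f,E)`: the infimum of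
`Σ ℋ^n_∞(f(Q_i))·side(Q_i)^m` over coverings of `E` by dyadic subcubes of
`[0,1]^{n+m}` with pairwise disjoint interiors. -/
def mappingContent (n m : ℕ) {Y : Type*} [PseudoEMetricSpace Y]
    (f : Eucl (n+m) → Y) (E : Set (Eucl (n+m))) : ℝ≥0∞ :=
  ⨅ (S : Set (DyadicCube (n+m)))
    (_ : E ⊆ ⋃ Q ∈ S, Q.toSet)
    (_ : S.Pairwise fun Q Q' => Disjoint (interior Q.toSet) (interior Q'.toSet)),
    ∑' Q : S, hContent n (f '' (Q : DyadicCube (n+m)).toSet) *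
      ENNReal.ofReal ((Q : DyadicCube (n+m)).side ^ m)

/-- The variant mapping content `Ĥ^{n,m}_∞(f,A)`: the infimum of
`Σ ℋ^n_∞(f(S_i))·diam(S_i)^m` over countable covers of `A` by arbitrary
subsets of `[0,1]^{n+m}`. -/
def hatContent (n m : ℕ) {Y : Type*} [PseudoEMetricSpace Y]
    (f : Eucl (n+m) → Y) (A : Set (Eucl (n+m))) : ℝ≥0∞ :=
  ⨅ (S : ℕ → Set (Eucl (n+m)))
    (_ : ∀ i, S i ⊆ unitCube (n+m))
    (_ : A ⊆ ⋃ i, S i),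
    ∑' i, hContent n (f '' S i) * EMetric.diam (S i) ^ m

/-- A metric tree: a geodesic metric space satisfying the four-point condition
`d(x,y)+d(z,w) ≤ max(d(x,z)+d(y,w), d(x,w)+d(y,z))` (equivalently, every geodesic
triangle is a tripod). -/
def IsMetricTree (T : Type*) [MetricSpace T] : Prop :=
  (∀ x y : T, ∃ γ : ℝ → T, γ 0 = x ∧ γ (dist x y) = y ∧
    ∀ s ∈ Set.Icc (0:ℝ) (dist x y), ∀ t ∈ Set.Icc (0:ℝ) (dist x y),
      dist (γ s) (γ t) = |s - t|) ∧
  (∀ x y z w : T, dist x y + dist z w ≤ max (dist x z + dist y w) (dist x w + dist y z))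

/-- The data of a factorization `f = h ∘ g` through a metric tree by `L`-Lipschitz
maps, on the set `A`. -/
structure TreeFactorization (L : ℝ≥0) {X Y : Type*} [MetricSpace X] [MetricSpace Y]
    (f : X → Y) (A : Set X) where
  T : Type
  [instT : MetricSpace T]
  tree : IsMetricTree T
  g : X → T
  h : T → Y
  lipg : LipschitzOnWith L g A
  liph : LipschitzWith L h
  factors : ∀ x ∈ A, f x = h (g x)

/-- `f` factors through a tree by `L`-Lipschitz maps on `A`. -/
def FactorsThroughTreeOnWith (L : ℝ≥0) {X Y : Type*} [MetricSpace X] [MetricSpace Y]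
    (f : X → Y) (A : Set X) : Prop :=
  Nonempty (TreeFactorization L f A)

/-- `f` factors through a tree (by Lipschitz maps) on `A`. -/
def FactorsThroughTreeOn {X Y : Type*} [MetricSpace X] [MetricSpace Y]
    (f : X → Y) (A : Set X) : Prop :=
  ∃ L : ℝ≥0, FactorsThroughTreeOnWith L f A

/-- `dist(f,g) < ε` in the ad hoc Gromov–Hausdorff sense: there are isometric
embeddings of the targets into `ℓ^∞` with `sup_{x ∈ [0,1]^d} ‖ι_Y(f x) − ι_Z(g x)‖ < ε`. -/
def approxDist {d : ℕ} {Y Z : Type*} [MetricSpace Y] [MetricSpace Z]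
    (f : Eucl d → Y) (g : Eucl d → Z) (ε : ℝ) : Prop :=
  ∃ (ιY : Y → ellInfty) (ιZ : Z → ellInfty), Isometry ιY ∧ Isometry ιZ ∧
    ∀ x ∈ unitCube d, ‖ιY (f x) - ιZ (g x)‖ < ε

/-- The closed axis-parallel cube with center `c` and side length `s`. -/
def cubeC {d : ℕ} (c : Eucl d) (s : ℝ) : Set (Eucl d) := {x | ∀ i, |x i - c i| ≤ s / 2}

/-- The face `F_k = {t ∈ [0,1]^d : t_k = 0}` of the unit cube. -/
def face0 (d : ℕ) (k : Fin d) : Set (Eucl d) := {x | x ∈ unitCube d ∧ x k = 0}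

/-- The face `F'_k = {t ∈ [0,1]^d : t_k = 1}` of the unit cube. -/
def face1 (d : ℕ) (k : Fin d) : Set (Eucl d) := {x | x ∈ unitCube d ∧ x k = 1}

/-- The distance between two subsets of a metric space:
`dist(A,B) = inf {d(a,b) : a ∈ A, b ∈ B}` (with value `∞` for empty sets). -/
def setEDist {Y : Type*} [PseudoEMetricSpace Y] (A B : Set Y) : ℝ≥0∞ :=
  ⨅ (a ∈ A) (b ∈ B), edist a b

/-- The combinatorial distance `dist_w(E,F)`: the infimum of `Σ_t w(i_t)` over all
chains `U_{i_0}, …, U_{i_T}` from the cover `U` in which consecutive sets intersect,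
`E` meets the first set and `F` meets the last set (`∞` if no chain exists). -/
def chainDist {X : Type*} {I : Type*} (U : I → Set X) (w : I → ℝ≥0∞)
    (E F : Set X) : ℝ≥0∞ :=
  ⨅ (T : ℕ) (c : Fin (T+1) → I)
    (_ : (E ∩ U (c 0)).Nonempty)
    (_ : (F ∩ U (c (Fin.last T))).Nonempty)
    (_ : ∀ t : Fin T, (U (c t.castSucc) ∩ U (c t.succ)).Nonempty),
    ∑ t, w (c t)

/-- Projection of `ℝ^{n+m}` onto the first `n` coordinates. -/
def projX (n m : ℕ) (v : Eucl (n+m)) : Eucl n := WithLp.toLp 2 (fun i => v (Fin.castAdd m i))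

/-- Projection of `ℝ^{n+m}` onto the last `m` coordinates. -/
def projY (n m : ℕ) (v : Eucl (n+m)) : Eucl m := WithLp.toLp 2 (fun i => v (Fin.natAdd n i))

/-- `(E,g)` is a Hard Sard pair for `f` with constant `C`: `g` is (the extension of)
a global `C`-bi-Lipschitz homeomorphism of `ℝ^{n+m}` such that, with `F = f ∘ g⁻¹`
on `g(E)`: points of `g(E)` have equal `F`-values iff they have equal `x`-coordinates,
and `(x,y) ↦ (F(x,y),y)` is `C`-bi-Lipschitz on `g(E)` (the target `Y × ℝ^m` carrying
the max metric). Both conditions are expressed via points `p, q ∈ E`. -/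
def IsHardSardPair (n m : ℕ) {Y : Type*} [MetricSpace Y] (f : Eucl (n+m) → Y)
    (E : Set (Eucl (n+m))) (g : Eucl (n+m) → Eucl (n+m)) (C : ℝ≥0) : Prop :=
  Function.Bijective g ∧ LipschitzWith C g ∧
  (∀ x y : Eucl (n+m), dist x y ≤ C * dist (g x) (g y)) ∧
  (∀ p ∈ E, ∀ q ∈ E, (f p = f q ↔ projX n m (g p) = projX n m (g q))) ∧
  (∀ p ∈ E, ∀ q ∈ E,
    max (dist (f p) (f q)) (dist (projY n m (g p)) (projY n m (g q))) ≤ C * dist (g p) (g q) ∧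
    dist (g p) (g q) ≤ C * max (dist (f p) (f q)) (dist (projY n m (g p)) (projY n m (g q))))

/-- The quantity `sup_{x,y ∈ Q} |d(f(x),f(y)) − ‖x−y‖_p|` whose infimum over
seminorms `p` is `side(Q)·md_f(Q)`. -/
def mdGauge {d : ℕ} {X : Type*} [MetricSpace X] (f : Eucl d → X) (Q : Set (Eucl d))
    (p : Seminorm ℝ (Eucl d)) : ℝ≥0∞ :=
  ⨆ (x ∈ Q) (y ∈ Q), ENNReal.ofReal |dist (f x) (f y) - p (x - y)|

/-!
On a complement `W` of the kernel of `p`, the seminorm is a norm, so `(W, p)` has an Auerbach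
basis: `p`-unit vectors whose coordinate functionals are bounded by `p`. Composing with the
projection onto `W` gives coordinates `c v ∈ ℝ^m`, `m ≤ d`, with `‖c v‖_∞ ≤ p v ≤ ‖c v‖₁`.
By Cauchy–Schwarz, `A v = √m • c v`, embedded isometrically into `ℝ^d`, satisfies
`p v ≤ |A v| ≤ m p v`.
-/

open Module

namespace Seminorm

section

variable {𝕜 E : Type*} [NormedField 𝕜] [AddCommGroup E] [Module 𝕜 E]

def ker (p : Seminorm 𝕜 E) : Submodule 𝕜 E where
  carrier := {x | p x = 0}
  add_mem' {x y} hx hy :=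
    le_antisymm ((map_add_le_add p x y).trans_eq (by simp_all)) (apply_nonneg p _)
  zero_mem' := map_zero p
  smul_mem' c x (hx : p x = 0) := by simp [map_smul_eq_mul, hx]

@[simp]
lemma mem_ker {p : Seminorm 𝕜 E} {x : E} : x ∈ p.ker ↔ p x = 0 := Iff.rfl

lemma apply_eq_of_sub_mem_ker (p : Seminorm 𝕜 E) {x y : E} (h : x - y ∈ p.ker) : p x = p y := by
  have := abs_sub_map_le_sub p x y
  rw [mem_ker.1 h] at this
  exact sub_eq_zero.1 (abs_nonpos_iff.1 this)

end

section

variable {E : Type*} [AddCommGroup E] [Module ℝ E]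

lemma le_sum_abs_repr {ι : Type*} [Fintype ι] (p : Seminorm ℝ E) (b : Basis ι ℝ E)
    (hb : ∀ i, p (b i) ≤ 1) (x : E) : p x ≤ ∑ i, |b.repr x i| :=
  calc p x = p (∑ i, b.repr x i • b i) := by rw [b.sum_repr]
  _ ≤ ∑ i, p (b.repr x i • b i) :=
    Finset.le_sum_of_subadditive p (map_zero p).le (map_add_le_add p) _ _
  _ ≤ ∑ i, |b.repr x i| := Finset.sum_le_sum fun i _ => by
    rw [map_smul_eq_mul, Real.norm_eq_abs]
    exact mul_le_of_le_one_right (abs_nonneg _) (hb i)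

lemma abs_le_of_forall_le_one (p : Seminorm ℝ E) (hp : ∀ x, p x = 0 → x = 0) (f : E →ₗ[ℝ] ℝ)
    (hf : ∀ x, p x ≤ 1 → |f x| ≤ 1) (x : E) : |f x| ≤ p x := by
  rcases (apply_nonneg p x).eq_or_lt with hx | hx
  · simp [hp x hx.symm]
  · have h := hf ((p x)⁻¹ • x) (by rw [map_smul_eq_mul, norm_inv, Real.norm_of_nonneg hx.le,
      inv_mul_cancel₀ hx.ne'])
    rwa [map_smul, smul_eq_mul, abs_mul, abs_inv, abs_of_pos hx, inv_mul_le_iff₀ hx,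
      mul_one] at h

end

end Seminorm

section FiniteDimensional

variable {E : Type*} [NormedAddCommGroup E] [NormedSpace ℝ E] [FiniteDimensional ℝ E]

lemma Module.Basis.continuous_det {ι : Type*} [Fintype ι] [DecidableEq ι] (e : Basis ι ℝ E) :
    Continuous e.det := by
  refine Continuous.matrix_det (continuous_matrix fun i j => ?_)
  exact (e.coord i).continuous_of_finiteDimensional.comp (continuous_apply j)

namespace Seminorm

lemma continuous_of_finiteDimensional (p : Seminorm ℝ E) : Continuous p :=
  continuousOn_univ.1 (p.convexOn.continuousOn isOpen_univ)

lemma exists_pos_mul_norm_le (p : Seminorm ℝ E) (hp : ∀ x, p x = 0 → x = 0) :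
    ∃ c > 0, ∀ x, c * ‖x‖ ≤ p x := by
  have := FiniteDimensional.proper_real E
  obtain ⟨c, hc, hcp⟩ := (isCompact_sphere (0 : E) 1).exists_forall_le'
    p.continuous_of_finiteDimensional.continuousOn (a := 0) fun x hx =>
      (apply_nonneg p x).lt_of_ne fun h => by simp [hp x h.symm] at hx
  refine ⟨c, hc, fun x => ?_⟩
  rcases eq_or_ne x 0 with rfl | hx
  · simp
  · have hnx : 0 < ‖x‖ := norm_pos_iff.2 hx
    have h := hcp (‖x‖⁻¹ • x) (by simp [norm_smul, hnx.ne'])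
    rwa [map_smul_eq_mul, norm_inv, norm_norm, le_inv_mul_iff₀ hnx, mul_comm] at h

lemma isCompact_closedBall_zero (p : Seminorm ℝ E) (hp : ∀ x, p x = 0 → x = 0) (r : ℝ) :
    IsCompact (p.closedBall 0 r) := by
  have := FiniteDimensional.proper_real E
  obtain ⟨c, hc, hcp⟩ := p.exists_pos_mul_norm_le hp
  refine Metric.isCompact_of_isClosed_isBounded ?_ ?_
  · simpa only [closedBall_zero_eq] using
      isClosed_le p.continuous_of_finiteDimensional continuous_const
  · refine isBounded_iff_forall_norm_le.2 ⟨r / c, fun x hx => ?_⟩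
    rw [le_div_iff₀ hc, mul_comm]
    exact (hcp x).trans (p.mem_closedBall_zero.1 hx)

/-- Auerbach's lemma. A family `v` in the `p`-unit ball maximising `|det v|` is such a basis:
by Cramer's rule, `b.coord i y * det v = det (update v i y)`. -/
theorem exists_basis_abs_repr_le (p : Seminorm ℝ E) (hp : ∀ x, p x = 0 → x = 0) :
    ∃ b : Basis (Fin (finrank ℝ E)) ℝ E, (∀ i, p (b i) ≤ 1) ∧ ∀ x i, |b.repr x i| ≤ p x := by
  classical
  set e := finBasis ℝ E
  set S := p.closedBall 0 1
  obtain ⟨v, hvS, hvmax⟩ := (isCompact_univ_pi fun _ => p.isCompact_closedBall_zero hp 1)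
    |>.exists_isMaxOn (univ_pi_nonempty_iff.2 fun _ => ⟨0, by simp⟩)
    (continuous_abs.comp e.continuous_det).continuousOn
  have hvS' : ∀ i, p (v i) ≤ 1 := fun i => p.mem_closedBall_zero.1 (hvS i (mem_univ i))
  have hdet : e.det v ≠ 0 := by
    have he : ∀ i, 0 < p (e i) := fun i => (apply_nonneg p _).lt_of_ne fun h =>
      e.ne_zero i (hp _ h.symm)
    have hw : (fun i => (p (e i))⁻¹ • e i) ∈ univ.pi fun _ => S := fun i _ => by
      rw [p.mem_closedBall_zero, map_smul_eq_mul, norm_inv, Real.norm_of_nonneg (he i).le,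
        inv_mul_cancel₀ (he i).ne']
    have hmax := hvmax hw
    simp only [mem_ofPred_eq, Function.comp_apply, AlternatingMap.map_smul_univ, e.det_self,
      smul_eq_mul, mul_one] at hmax
    exact abs_pos.1 ((abs_pos.2 (Finset.prod_ne_zero_iff.2 fun i _ =>
      inv_ne_zero (he i).ne')).trans_le hmax)
  obtain ⟨hli, hsp⟩ := e.is_basis_iff_det.2 (isUnit_iff_ne_zero.2 hdet)
  set b := Basis.mk hli hsp.ge
  refine ⟨b, fun i => by simpa [b] using hvS' i, fun x i => ?_⟩
  refine p.abs_le_of_forall_le_one hp (b.coord i) (fun y hy => ?_) x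
  have h := congr_arg (fun f => |f y|) (e.det_smul_mk_coord_eq_det_update hli hsp.ge i)
  simp only [LinearMap.smul_apply, smul_eq_mul, abs_mul, MultilinearMap.toLinearMap_apply] at h
  have hmax : |e.det (Function.update v i y)| ≤ |e.det v| :=
    hvmax ((update_mem_pi_iff_of_mem hvS).2 fun _ => p.mem_closedBall_zero.2 hy)
  refine le_of_mul_le_mul_left ?_ (abs_pos.2 hdet)
  rw [mul_one]
  exact h.trans_le hmax

theorem exists_linearMap_abs_le_le_sum_abs (p : Seminorm ℝ E) :
    ∃ m ≤ finrank ℝ E, ∃ f : E →ₗ[ℝ] Fin m → ℝ,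
      ∀ x, (∀ i, |f x i| ≤ p x) ∧ p x ≤ ∑ i, |f x i| := by
  obtain ⟨W, hW⟩ := p.ker.exists_isCompl
  have hpW : ∀ x : W, p.comp W.subtype x = 0 → x = 0 := fun x hx =>
    Subtype.ext (Submodule.disjoint_def.1 hW.disjoint x hx x.2)
  obtain ⟨b, hb, hbp⟩ := (p.comp W.subtype).exists_basis_abs_repr_le hpW
  have hproj : ∀ x, p (W.projection p.ker hW.symm x) = p x := fun x =>
    (p.apply_eq_of_sub_mem_ker (Submodule.sub_projection_mem hW.symm x)).symm
  refine ⟨finrank ℝ W, W.finrank_le, b.equivFun ∘ₗ W.projectionOnto p.ker hW.symm, fun x => ?_⟩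
  have hx := hproj x
  rw [Submodule.projection_apply] at hx
  refine ⟨fun i => hx ▸ hbp _ i, ?_⟩
  rw [← hx]
  exact (p.comp W.subtype).le_sum_abs_repr b hb _

end Seminorm
end FiniteDimensional

namespace EuclideanSpace

variable {ι : Type*} [Fintype ι]

lemma sum_abs_le_sqrt_card_mul_norm (x : EuclideanSpace ℝ ι) :
    ∑ i, |x i| ≤ √(Fintype.card ι) * ‖x‖ := by
  rw [← Real.sqrt_sq (norm_nonneg x), ← Real.sqrt_mul (Nat.cast_nonneg _)]
  refine Real.le_sqrt_of_sq_le ?_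
  simpa [EuclideanSpace.norm_sq_eq, sq_abs] using
    sq_sum_le_card_mul_sum_sq (s := Finset.univ) (f := fun i => |x i|)

lemma norm_le_sqrt_card_mul {x : EuclideanSpace ℝ ι} {t : ℝ} (ht : 0 ≤ t)
    (hx : ∀ i, |x i| ≤ t) : ‖x‖ ≤ √(Fintype.card ι) * t := by
  rw [← Real.sqrt_sq ht, ← Real.sqrt_mul (Nat.cast_nonneg _), ← Real.sqrt_sq (norm_nonneg x)]
  refine Real.sqrt_le_sqrt ?_
  rw [EuclideanSpace.norm_sq_eq]
  calc ∑ i, ‖x i‖ ^ 2 ≤ ∑ _i : ι, t ^ 2 := Finset.sum_le_sum fun i _ =>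
        pow_le_pow_left₀ (norm_nonneg _) (hx i) 2
  _ = Fintype.card ι * t ^ 2 := by simp

end EuclideanSpace

theorem exists_linearIsometry_of_finrank_le {E F : Type*} [NormedAddCommGroup E]
    [InnerProductSpace ℝ E] [FiniteDimensional ℝ E] [NormedAddCommGroup F] [InnerProductSpace ℝ F]
    [FiniteDimensional ℝ F] (h : finrank ℝ E ≤ finrank ℝ F) : Nonempty (E →ₗᵢ[ℝ] F) := by
  set bE := stdOrthonormalBasis ℝ E
  set bF := stdOrthonormalBasis ℝ F
  refine ⟨(bE.toBasis.constr ℝ (bF ∘ Fin.castLE h)).isometryOfOrthonormal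
    (v := bE.toBasis) bE.orthonormal ?_⟩
  convert bF.orthonormal.comp _ (Fin.castLE_injective h) using 1
  ext i
  simp

/-- **Lemma on seminorms (F. John).** For every seminorm on `ℝ^d` there is a linear map
`A` with `‖v‖ ≤ |Av| ≤ C‖v‖` for all `v`, where one may take `C = d`. -/
theorem seminorm_comparable_to_linear_map (d : ℕ) (hd : 0 < d) :
    ∃ C : ℝ, 0 < C ∧ C = d ∧
      ∀ p : Seminorm ℝ (Eucl d),
        ∃ A : Eucl d →ₗ[ℝ] Eucl d, ∀ v : Eucl d, p v ≤ ‖A v‖ ∧ ‖A v‖ ≤ C * p v := by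
  refine ⟨d, Nat.cast_pos.2 hd, rfl, fun p => ?_⟩
  obtain ⟨m, hm, f, hf⟩ := p.exists_linearMap_abs_le_le_sum_abs
  obtain ⟨J⟩ := exists_linearIsometry_of_finrank_le (E := EuclideanSpace ℝ (Fin m))
    (F := Eucl d) (by simpa using hm)
  let g := (WithLp.linearEquiv 2 ℝ (Fin m → ℝ)).symm.toLinearMap ∘ₗ f
  refine ⟨√m • (J.toLinearMap ∘ₗ g), fun v => ?_⟩
  obtain ⟨hle, hsum⟩ := hf v
  have hAv : ‖(√m • (J.toLinearMap ∘ₗ g)) v‖ = √m * ‖g v‖ := by simp [norm_smul]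
  rw [hAv]
  constructor
  · calc p v ≤ ∑ i, |f v i| := hsum
      _ ≤ √m * ‖g v‖ := by simpa [g] using EuclideanSpace.sum_abs_le_sqrt_card_mul_norm (g v)
  · calc √m * ‖g v‖ ≤ √m * (√m * p v) := by
          gcongr; simpa using EuclideanSpace.norm_le_sqrt_card_mul (x := g v) (apply_nonneg p v) hle
      _ = m * p v := by rw [← mul_assoc, Real.mul_self_sqrt (Nat.cast_nonneg _)]
      _ ≤ d * p v := by gcongr; simpa using hm
end
end

section
/- For all nonnegative integers n, m there is a constant c₀ = c₀(n,m) > 0 with the following property: let ‖·‖ be a seminorm on ℝ^{n+m}, let δ > 0, and suppose there is an n-dimensional linear subspace P ⊆ ℝ^{n+m} such that ‖v‖ ≥ δ|v| for all v ∈ P. Then there is an orthonormal basis v_1, …, v_{n+m} of ℝ^{n+m} such that ‖Σ_{i=1}^{n+m} a_i v_i‖ ≥ c₀·δ·Σ_{i=1}^n |a_i| for all choices of a_1, …, a_{n+m} ∈ ℝ. -/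
open scoped ENNReal NNReal
open Set

noncomputable section

/-!
Choose an orthonormal basis greedily from the top: `e (D-1)` minimises `p` on the unit
sphere, and each `e k` minimises `p` on the unit vectors orthogonal to all `e j`, `j > k`.
Then `p ∘ e` is antitone, and peeling off the lowest-index coefficient of `x = Σ aⱼ eⱼ` costs
a factor `4` at most: `|a_k| p(e_k) ≤ p(x)` by minimality, and the tail has `p ≤ 2 p(x)`.
Hence `Σ |aⱼ| p(eⱼ) ≤ 4^D p(x)`. Finally, for `i < n` the span of `e i, …, e (D-1)` has
dimension `> m`, so it meets `P` in a unit vector `w`, and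
`δ ≤ p(w) ≤ Σ_{j ≥ i} p(e j) ≤ D p(e i)`.
-/

open Finset Module
open scoped RealInnerProductSpace

namespace Seminorm

theorem exists_norm_eq_one_forall_mul_norm_le {F : Type*} [NormedAddCommGroup F]
    [NormedSpace ℝ F] [FiniteDimensional ℝ F] (p : Seminorm ℝ F) {K : Submodule ℝ F}
    (hK : K ≠ ⊥) : ∃ u ∈ K, ‖u‖ = 1 ∧ ∀ v ∈ K, p u * ‖v‖ ≤ p v := by
  obtain ⟨v₀, hv₀K, hv₀⟩ := (Submodule.ne_bot_iff K).mp hK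
  obtain ⟨u, ⟨huK, hu⟩, hmin⟩ :=
    ((isCompact_sphere (0 : F) 1).inter_left K.closed_of_finiteDimensional).exists_isMinOn
      ⟨_, K.smul_mem _ hv₀K, mem_sphere_zero_iff_norm.mpr (norm_smul_inv_norm (𝕜 := ℝ) hv₀)⟩
      ((p.convexOn.continuousOn isOpen_univ).mono (Set.subset_univ _))
  refine ⟨u, huK, mem_sphere_zero_iff_norm.mp hu, fun v hvK => ?_⟩
  rcases eq_or_ne v 0 with rfl | hv
  · simp
  have : p u ≤ p (‖v‖⁻¹ • v) :=
    hmin ⟨K.smul_mem ‖v‖⁻¹ hvK, mem_sphere_zero_iff_norm.mpr (norm_smul_inv_norm (𝕜 := ℝ) hv)⟩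
  rw [map_smul_eq_mul, norm_inv, norm_norm] at this
  rwa [← le_inv_mul_iff₀' (norm_pos_iff.mpr hv)]

end Seminorm

section Orthonormal

variable {E : Type*} [NormedAddCommGroup E] [InnerProductSpace ℝ E]

theorem Orthonormal.abs_le_norm_sum {ι : Type*} {v : ι → E} (hv : Orthonormal ℝ v)
    (c : ι → ℝ) {s : Finset ι} {i : ι} (hi : i ∈ s) : |c i| ≤ ‖∑ j ∈ s, c j • v j‖ :=
  calc |c i| = |⟪v i, ∑ j ∈ s, c j • v j⟫| := by rw [hv.inner_right_sum c hi]
    _ ≤ ‖v i‖ * ‖∑ j ∈ s, c j • v j‖ := abs_real_inner_le_norm _ _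
    _ = ‖∑ j ∈ s, c j • v j‖ := by rw [hv.1 i, one_mul]

theorem Orthonormal.seminorm_le_norm_mul_sum {ι : Type*} [Fintype ι] {v : ι → E}
    (hv : Orthonormal ℝ v) (p : Seminorm ℝ E) {w : E}
    (hw : w ∈ Submodule.span ℝ (Set.range v)) : p w ≤ ‖w‖ * ∑ i, p (v i) := by
  obtain ⟨c, rfl⟩ := (Submodule.mem_span_range_iff_exists_fun ℝ).mp hw
  rw [mul_sum]
  refine (le_sum_of_subadditive p (map_zero p).le (map_add_le_add p) _ _).trans
    (sum_le_sum fun i _ => ?_)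
  rw [map_smul_eq_mul, Real.norm_eq_abs]
  gcongr
  exact hv.abs_le_norm_sum c (mem_univ i)

theorem Orthonormal.le_sum_seminorm_of_finrank_lt [FiniteDimensional ℝ E] {ι : Type*}
    {e : ι → E} (he : Orthonormal ℝ e) (p : Seminorm ℝ E) {P : Submodule ℝ E} {δ : ℝ}
    (hP : ∀ v ∈ P, δ * ‖v‖ ≤ p v) {s : Finset ι} (hs : finrank ℝ E < finrank ℝ P + #s) :
    δ ≤ ∑ j ∈ s, p (e j) := by
  have hes : Orthonormal ℝ (fun j : s => e j) := he.comp _ Subtype.val_injective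
  set Q := Submodule.span ℝ (Set.range fun j : s => e j)
  have hQ : finrank ℝ Q = #s := by
    rw [finrank_span_eq_card hes.linearIndependent, Fintype.card_coe]
  obtain ⟨w, hwP, hwQ, hw⟩ : ∃ w ∈ P, w ∈ Q ∧ w ≠ 0 := by
    by_contra! h
    have := Submodule.finrank_add_finrank_le_of_disjoint
      (Submodule.disjoint_def.mpr fun w hwP hwQ => h w hwP hwQ)
    omega
  have := (hP w hwP).trans (hes.seminorm_le_norm_mul_sum p hwQ)
  rw [mul_comm, sum_coe_sort s fun j => p (e j)] at this
  exact le_of_mul_le_mul_left this (norm_pos_iff.mpr hw)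

theorem Orthonormal.fin_cons {K : ℕ} {u : E} {f : Fin K → E} (hf : Orthonormal ℝ f)
    (hu : ‖u‖ = 1) (huf : ∀ j, ⟪u, f j⟫ = 0) :
    Orthonormal ℝ (Fin.cons u f : Fin (K + 1) → E) := by
  refine ⟨Fin.cases hu hf.1, fun i j hij => ?_⟩
  cases i using Fin.cases <;> cases j using Fin.cases
  · exact absurd rfl hij
  · exact huf _
  · rw [real_inner_comm]; exact huf _
  · exact hf.2 fun h => hij (congrArg Fin.succ h)

end Orthonormal

namespace Seminorm

variable {E : Type*} [NormedAddCommGroup E] [InnerProductSpace ℝ E] (p : Seminorm ℝ E)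

/-- `e k` minimises `p` on the unit vectors orthogonal to every `e j` with `j > k`. -/
structure IsGreedyOrthonormal {ι : Type*} [LinearOrder ι] (e : ι → E) : Prop where
  orthonormal : Orthonormal ℝ e
  mul_norm_le : ∀ k v, (∀ j, k < j → ⟪e j, v⟫ = 0) → p (e k) * ‖v‖ ≤ p v

theorem exists_isGreedyOrthonormal [FiniteDimensional ℝ E] :
    ∀ K ≤ finrank ℝ E, ∃ e : Fin K → E, p.IsGreedyOrthonormal e
  | 0, _ => ⟨Fin.elim0, ⟨⟨Fin.rec0, fun i => i.elim0⟩, fun k => k.elim0⟩⟩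
  | K + 1, hK => by
    obtain ⟨f, hf⟩ := exists_isGreedyOrthonormal K (by omega)
    set W := Submodule.span ℝ (Set.range f)
    have hW : Wᗮ ≠ ⊥ := by
      rw [Ne, Submodule.orthogonal_eq_bot_iff]
      intro htop
      have : finrank ℝ W ≤ K := by simpa [Set.finrank] using finrank_range_le_card (R := ℝ) f
      rw [htop, finrank_top] at this
      omega
    obtain ⟨u, huW, hu, hmin⟩ := p.exists_norm_eq_one_forall_mul_norm_le hW
    have hWperp : ∀ v, (∀ j, ⟪f j, v⟫ = 0) → v ∈ Wᗮ := fun v hv w hw => by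
      obtain ⟨c, rfl⟩ := (Submodule.mem_span_range_iff_exists_fun ℝ).mp hw
      simp [sum_inner, real_inner_smul_left, hv]
    have huf : ∀ j, ⟪u, f j⟫ = 0 := fun j =>
      Submodule.inner_left_of_mem_orthogonal (Submodule.subset_span (Set.mem_range_self j)) huW
    refine ⟨Fin.cons u f, hf.orthonormal.fin_cons hu huf, ?_⟩
    intro k v hv
    cases k using Fin.cases with
    | zero => exact hmin v (hWperp v fun j => hv j.succ (Fin.succ_pos j))
    | succ k => exact hf.mul_norm_le k v fun j hkj => hv j.succ (Fin.succ_lt_succ_iff.mpr hkj)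

namespace IsGreedyOrthonormal

variable {p} {ι : Type*} [LinearOrder ι] {e : ι → E} (he : p.IsGreedyOrthonormal e)
include he

theorem antitone : Antitone (p ∘ e) := fun j k hjk => by
  simpa [he.orthonormal.1 j] using he.mul_norm_le k (e j)
    fun i hki => he.orthonormal.2 (hjk.trans_lt hki).ne'

theorem sum_abs_mul_le (a : ι → ℝ) (s : Finset ι) :
    ∑ j ∈ s, |a j| * p (e j) ≤ 4 ^ #s * p (∑ j ∈ s, a j • e j) := by
  induction s using Finset.induction_on_max with
  | empty => simp
  | insert k s hlt ih =>
    have hks : k ∉ s := fun h => lt_irrefl k (hlt k h)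
    set x := ∑ j ∈ insert k s, a j • e j
    have hx : x = a k • e k + ∑ j ∈ s, a j • e j := sum_insert hks
    have hx_orth : ∀ j, k < j → ⟪e j, x⟫ = 0 := fun j hkj => by
      refine (inner_sum _ _ _).trans (sum_eq_zero fun i hi => ?_)
      have hij : j ≠ i := by
        rcases mem_insert.mp hi with rfl | hi
        exacts [hkj.ne', ((hlt i hi).trans hkj).ne']
      rw [inner_smul_right, he.orthonormal.2 hij, mul_zero]
    have hhead : |a k| * p (e k) ≤ p x :=
      calc |a k| * p (e k) ≤ ‖x‖ * p (e k) := by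
            gcongr; exact he.orthonormal.abs_le_norm_sum a (mem_insert_self k s)
        _ = p (e k) * ‖x‖ := mul_comm _ _
        _ ≤ p x := he.mul_norm_le k x hx_orth
    have htail : p (∑ j ∈ s, a j • e j) ≤ 2 * p x :=
      calc p (∑ j ∈ s, a j • e j) = p (x - a k • e k) := by rw [hx, add_sub_cancel_left]
        _ ≤ p x + p (a k • e k) := map_sub_le_add p _ _
        _ ≤ 2 * p x := by rw [map_smul_eq_mul, Real.norm_eq_abs]; linarith
    have hpow : (1 : ℝ) ≤ 4 ^ #s := one_le_pow₀ (by norm_num)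
    rw [sum_insert hks, card_insert_of_notMem hks, pow_succ]
    nlinarith [apply_nonneg p x]

theorem le_card_mul_of_finrank_lt [Fintype ι] [LocallyFiniteOrderTop ι]
    [FiniteDimensional ℝ E] {P : Submodule ℝ E} {δ : ℝ} (hP : ∀ v ∈ P, δ * ‖v‖ ≤ p v) {i : ι}
    (hi : finrank ℝ E < finrank ℝ P + #(Ici i)) : δ ≤ Fintype.card ι * p (e i) :=
  calc δ ≤ ∑ j ∈ Ici i, p (e j) := he.orthonormal.le_sum_seminorm_of_finrank_lt p hP hi
    _ ≤ #(Ici i) • p (e i) := sum_le_card_nsmul _ _ _ fun j hj => he.antitone (mem_Ici.mp hj)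
    _ ≤ Fintype.card ι * p (e i) := by
        rw [nsmul_eq_mul]
        gcongr
        exact_mod_cast card_le_univ _

end IsGreedyOrthonormal

end Seminorm

/-- **Lemma (adapted orthonormal basis).** If a seminorm on `ℝ^{n+m}` dominates `δ` times
the Euclidean norm on some `n`-dimensional subspace, then there is an orthonormal basis
`v₁, …, v_{n+m}` with `‖Σ aᵢvᵢ‖ ≳ δ Σ_{i ≤ n} |aᵢ|`. -/
theorem seminorm_adapted_orthonormal_basis (n m : ℕ) :
    ∃ c₀ > (0:ℝ),
      ∀ p : Seminorm ℝ (Eucl (n + m)), ∀ δ > (0:ℝ),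
        ∀ P : Submodule ℝ (Eucl (n + m)), Module.finrank ℝ P = n →
          (∀ v ∈ P, δ * ‖v‖ ≤ p v) →
          ∃ v : Fin (n + m) → Eucl (n + m),
            Orthonormal ℝ v ∧ Submodule.span ℝ (Set.range v) = ⊤ ∧
            ∀ a : Fin (n + m) → ℝ,
              c₀ * δ * ∑ i : Fin n, |a (Fin.castAdd m i)| ≤ p (∑ i, a i • v i) := by
  refine ⟨(4 ^ (n + m) * (n + m + 1))⁻¹, by positivity, fun p δ _ P hP hPδ => ?_⟩
  obtain ⟨e, he⟩ := p.exists_isGreedyOrthonormal (n + m) (by simp)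
  refine ⟨e, he.orthonormal,
    he.orthonormal.linearIndependent.span_eq_top_of_card_eq_finrank' (by simp), fun a => ?_⟩
  have hlow : ∀ i : Fin n, δ / (n + m + 1) ≤ p (e (Fin.castAdd m i)) := fun i => by
    rw [div_le_iff₀' (by positivity)]
    have hi : finrank ℝ (Eucl (n + m)) < finrank ℝ P + #(Ici (Fin.castAdd m i)) := by
      simp [hP]; omega
    refine (he.le_card_mul_of_finrank_lt hPδ hi).trans ?_
    gcongr
    simp
  calc ((4 : ℝ) ^ (n + m) * (n + m + 1))⁻¹ * δ * ∑ i : Fin n, |a (Fin.castAdd m i)|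
      = ((4 : ℝ) ^ (n + m))⁻¹ * ∑ i : Fin n, |a (Fin.castAdd m i)| * (δ / (n + m + 1)) := by
        rw [← sum_mul, mul_inv, div_eq_mul_inv]; ring
    _ ≤ ((4 : ℝ) ^ (n + m))⁻¹ * ∑ i : Fin n, |a (Fin.castAdd m i)| * p (e (Fin.castAdd m i)) := by
        gcongr with i; exact hlow i
    _ ≤ ((4 : ℝ) ^ (n + m))⁻¹ * ∑ i, |a i| * p (e i) := by
        gcongr
        rw [Fin.sum_univ_add]
        exact le_add_of_nonneg_right (sum_nonneg fun i _ => by positivity)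
    _ ≤ p (∑ i, a i • e i) := by
        rw [inv_mul_le_iff₀ (by positivity)]
        simpa using he.sum_abs_mul_le a univ
end
end

section
/- Fix a positive integer d. Let f_i : [0,1]^d → Y_i be a sequence of 1-Lipschitz maps onto metric spaces Y_i. Then there exist a compact set Y ⊆ ℓ^∞, a 1-Lipschitz map f : [0,1]^d → ℓ^∞ with image Y, a subsequence {f_{i_k}}, and isometric embeddings ι_k : Y_{i_k} → ℓ^∞ such that sup_{x∈[0,1]^d} ‖ι_k(f_{i_k}(x)) − f(x)‖_∞ → 0 as k → ∞; in particular, dist(f_{i_k}, f) → 0. -/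
open scoped ENNReal NNReal
open Set

noncomputable section

/-! By Arzelà–Ascoli, a subsequence of the pulled-back pseudometrics
`(x, y) ↦ dist (f i x) (f i y)` on the compact cube converges uniformly. Embed each `Y i` into
`ℓ^∞` by the Kuratowski embedding along the image of one fixed dense sequence `x` of the cube:
the coordinates of `ι (f i z)` are `dist (f i z) (f i (x n)) - dist (f i (x 0)) (f i (x n))`,
so the embedded maps form a uniformly Cauchy sequence, whose limit in the complete space `ℓ^∞`
is the required 1-Lipschitz map. -/

open Filter Function Topology BoundedContinuousFunction KuratowskiEmbedding

theorem isCompact_unitCube (d : ℕ) : IsCompact (unitCube d) := by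
  have h : unitCube d =
      (PiLp.homeomorph 2 (fun _ : Fin d => ℝ)) ⁻¹' univ.pi fun _ => Icc 0 1 := by
    ext x
    simp only [unitCube, mem_preimage, mem_univ_pi]
    rfl
  rw [h]
  exact (PiLp.homeomorph 2 _).isCompact_preimage.2 (isCompact_univ_pi fun _ => isCompact_Icc)

theorem Equicontinuous.exists_strictMono_tendstoUniformly {α β : Type*} [TopologicalSpace α]
    [CompactSpace α] [MetricSpace β] {s : Set β} (hs : IsCompact s) {g : ℕ → α → β}
    (hg : Equicontinuous g) (hgs : ∀ n x, g n x ∈ s) :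
    ∃ G : α → β, ∃ φ : ℕ → ℕ, StrictMono φ ∧
      TendstoUniformly (fun k => g (φ k)) G atTop := by
  let u : ℕ → α →ᵇ β := fun n => .mkOfCompact ⟨g n, hg.continuous n⟩
  have hu : IsCompact (closure (range u)) := by
    refine arzela_ascoli s hs _ ?_ ?_
    · rintro _ x ⟨n, rfl⟩
      exact hgs n x
    · exact fun x₀ U hU => (hg x₀ U hU).mono fun x hx => by rintro ⟨_, n, rfl⟩; exact hx n
  obtain ⟨G, -, φ, hφ, hlim⟩ := hu.tendsto_subseq fun n => subset_closure (mem_range_self n)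
  exact ⟨G, φ, hφ, BoundedContinuousFunction.tendsto_iff_tendstoUniformly.1 hlim⟩

theorem UniformCauchySeqOn.exists_tendstoUniformlyOn {ι α β : Type*} [UniformSpace β]
    [CompleteSpace β] [Nonempty β] {F : ι → α → β} {p : Filter ι} [p.NeBot] {s : Set α}
    (hF : UniformCauchySeqOn F p s) : ∃ G : α → β, TendstoUniformlyOn F G p s := by
  refine ⟨fun x => lim (p.map fun i => F i x), hF.tendstoUniformlyOn_of_tendsto fun x hx => ?_⟩
  exact le_nhds_lim (CompleteSpace.complete (hF.cauchy_map hx))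

theorem LipschitzWith.of_tendsto {ι α β : Type*} [PseudoEMetricSpace α] [PseudoEMetricSpace β]
    {K : ℝ≥0} {F : ι → α → β} {G : α → β} {p : Filter ι} [p.NeBot]
    (hF : ∀ i, LipschitzWith K (F i))
    (hG : ∀ x, Tendsto (fun i => F i x) p (𝓝 (G x))) : LipschitzWith K G :=
  (isClosed_setOfPred_lipschitzWith K).mem_of_tendsto (tendsto_pi_nhds.2 hG) (.of_forall hF)

theorem dist_embeddingOfSubset_le {Y Z : Type*} [MetricSpace Y] [MetricSpace Z]
    {p : ℕ → Y} {q : ℕ → Z} {a : Y} {b : Z} {ε : ℝ}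
    (ha : ∀ n, |dist a (p n) - dist b (q n)| ≤ ε)
    (h0 : ∀ n, |dist (p 0) (p n) - dist (q 0) (q n)| ≤ ε) :
    dist (embeddingOfSubset p a) (embeddingOfSubset q b) ≤ 2 * ε := by
  rw [dist_eq_norm]
  refine lp.norm_le_of_forall_le' _ fun n => ?_
  simp only [lp.coeFn_sub, Pi.sub_apply, embeddingOfSubset_coe, Real.norm_eq_abs]
  calc |dist a (p n) - dist (p 0) (p n) - (dist b (q n) - dist (q 0) (q n))|
      ≤ |dist a (p n) - dist b (q n)| + |dist (p 0) (p n) - dist (q 0) (q n)| := by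
        rw [sub_sub_sub_comm]; exact abs_sub _ _
    _ ≤ 2 * ε := by linarith [ha n, h0 n]

section LipschitzSequence

variable {X : Type*} {Y : ℕ → Type*} [∀ i, MetricSpace (Y i)]

theorem exists_strictMono_tendstoUniformly_dist_comp [PseudoMetricSpace X] [CompactSpace X]
    {K : ℝ≥0} {f : ∀ i, X → Y i} (hf : ∀ i, LipschitzWith K (f i)) :
    ∃ R : X × X → ℝ, ∃ φ : ℕ → ℕ, StrictMono φ ∧
      TendstoUniformly (fun k (p : X × X) => dist (f (φ k) p.1) (f (φ k) p.2)) R atTop := by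
  have hlip : ∀ i, LipschitzWith (2 * K) fun p : X × X => dist (f i p.1) (f i p.2) := fun i => by
    simpa [comp_def] using LipschitzWith.dist.comp
      (((hf i).comp .prod_fst).prodMk ((hf i).comp .prod_snd))
  refine (LipschitzWith.uniformEquicontinuous _ _ hlip).equicontinuous
    |>.exists_strictMono_tendstoUniformly (s := Icc 0 (K * Metric.diam (univ : Set X)))
      isCompact_Icc fun i p => ⟨dist_nonneg, ?_⟩
  calc dist (f i p.1) (f i p.2) ≤ K * dist p.1 p.2 := (hf i).dist_le_mul _ _
    _ ≤ K * Metric.diam (univ : Set X) := by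
      gcongr
      exact Metric.dist_le_diam_of_mem isCompact_univ.isBounded trivial trivial

theorem uniformCauchySeqOn_embeddingOfSubset_comp {f : ∀ i, X → Y i} (x : ℕ → X)
    (hf : UniformCauchySeqOn (fun i (p : X × X) => dist (f i p.1) (f i p.2)) atTop univ) :
    UniformCauchySeqOn (fun i z => embeddingOfSubset (f i ∘ x) (f i z)) atTop univ := by
  rw [Metric.uniformCauchySeqOn_iff] at hf ⊢
  intro ε hε
  obtain ⟨N, hN⟩ := hf (ε / 3) (by positivity)
  refine ⟨N, fun k hk l hl z _ => ?_⟩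
  have hρ : ∀ a b, |dist (f k a) (f k b) - dist (f l a) (f l b)| ≤ ε / 3 := fun a b =>
    (hN k hk l hl (a, b) trivial).le
  calc _ ≤ 2 * (ε / 3) :=
        dist_embeddingOfSubset_le (fun n => hρ z (x n)) fun n => hρ (x 0) (x n)
    _ < ε := by linarith

theorem exists_strictMono_isometry_tendstoUniformly [PseudoMetricSpace X] [CompactSpace X]
    [Nonempty X] {K : ℝ≥0} {f : ∀ i, X → Y i} (hf : ∀ i, LipschitzWith K (f i))
    (hsurj : ∀ i, Surjective (f i)) :
    ∃ F : X → ellInfty, LipschitzWith K F ∧ ∃ φ : ℕ → ℕ, StrictMono φ ∧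
      ∃ ι : ∀ k, Y (φ k) → ellInfty, (∀ k, Isometry (ι k)) ∧
        TendstoUniformly (fun k z => ι k (f (φ k) z)) F atTop := by
  obtain ⟨x, hx⟩ := TopologicalSpace.exists_dense_seq X
  obtain ⟨R, φ, hφ, hR⟩ := exists_strictMono_tendstoUniformly_dist_comp hf
  let ι k := embeddingOfSubset (f (φ k) ∘ x)
  have hι : ∀ k, Isometry (ι k) := fun k =>
    embeddingOfSubset_isometry _ ((hsurj _).denseRange.comp hx (hf _).continuous)
  obtain ⟨F, hF⟩ := (uniformCauchySeqOn_embeddingOfSubset_comp x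
    (tendstoUniformlyOn_univ.2 hR).uniformCauchySeqOn).exists_tendstoUniformlyOn
  have hF : TendstoUniformly (fun k z => ι k (f (φ k) z)) F atTop := tendstoUniformlyOn_univ.1 hF
  refine ⟨F, .of_tendsto (fun k => ?_) hF.tendsto_at, φ, hφ, ι, hι, hF⟩
  simpa [comp_def] using (hι k).lipschitz.comp (hf (φ k))

end LipschitzSequence

theorem lipschitz_maps_compactness_general (d : ℕ)
    (Y : ℕ → Type) [∀ i, MetricSpace (Y i)]
    (f : ∀ i, Eucl d → Y i)
    (hf : ∀ i, LipschitzOnWith 1 (f i) (unitCube d))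
    (honto : ∀ i, ∀ y : Y i, ∃ x ∈ unitCube d, f i x = y) :
    ∃ (K : Set ellInfty) (F : Eucl d → ellInfty),
      IsCompact K ∧ LipschitzOnWith 1 F (unitCube d) ∧ F '' unitCube d = K ∧
      ∃ φ : ℕ → ℕ, StrictMono φ ∧
        ∃ ι : ∀ k : ℕ, Y (φ k) → ellInfty,
          (∀ k, Isometry (ι k)) ∧
          (∀ ε > (0:ℝ), ∃ N : ℕ, ∀ k ≥ N, ∀ x ∈ unitCube d,
            ‖ι k (f (φ k) x) - F x‖ < ε) ∧
          (∀ ε > (0:ℝ), ∃ N : ℕ, ∀ k ≥ N, approxDist (f (φ k)) F ε) := by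
  have hQ : IsCompact (unitCube d) := isCompact_unitCube d
  have := isCompact_iff_compactSpace.1 hQ
  have : Nonempty (unitCube d) := ⟨⟨0, fun i => by simp⟩⟩
  obtain ⟨F, hFlip, φ, hφ, ι, hι, hF⟩ := exists_strictMono_isometry_tendstoUniformly
    (fun i => (hf i).to_restrict) fun i y => by
      obtain ⟨x, hx, rfl⟩ := honto i y
      exact ⟨⟨x, hx⟩, rfl⟩
  set G := extend Subtype.val F 0
  have hGF : ∀ x (hx : x ∈ unitCube d), G x = F ⟨x, hx⟩ := fun x hx =>
    Subtype.val_injective.extend_apply F 0 ⟨x, hx⟩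
  have hGlip : LipschitzOnWith 1 G (unitCube d) := fun x hx y hy => by
    rw [hGF x hx, hGF y hy]
    exact hFlip ⟨x, hx⟩ ⟨y, hy⟩
  have hconv : ∀ ε > (0:ℝ), ∃ N, ∀ k ≥ N, ∀ x ∈ unitCube d,
      ‖ι k (f (φ k) x) - G x‖ < ε := by
    intro ε hε
    obtain ⟨N, hN⟩ := eventually_atTop.1 (Metric.tendstoUniformly_iff.1 hF ε hε)
    refine ⟨N, fun k hk x hx => ?_⟩
    rw [← dist_eq_norm, dist_comm, hGF x hx]
    exact hN k hk ⟨x, hx⟩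
  refine ⟨_, G, hQ.image_of_continuousOn hGlip.continuousOn, hGlip, rfl, φ, hφ, ι, hι, hconv,
    fun ε hε => ?_⟩
  obtain ⟨N, hN⟩ := hconv ε hε
  exact ⟨N, fun k hk => ⟨ι k, id, hι k, isometry_id, hN k hk⟩⟩

/-- **Compactness lemma.** Any sequence of 1-Lipschitz maps from `[0,1]^d` onto metric
spaces has a subsequence converging (after isometric embedding into `ℓ^∞`) uniformly to
a 1-Lipschitz map onto a compact subset of `ℓ^∞`; in particular `dist(f_{i_k}, f) → 0`. -/
theorem lipschitz_maps_compactness (d : ℕ) (hd : 0 < d)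
    (Y : ℕ → Type) [∀ i, MetricSpace (Y i)]
    (f : ∀ i, Eucl d → Y i)
    (hf : ∀ i, LipschitzOnWith 1 (f i) (unitCube d))
    (honto : ∀ i, ∀ y : Y i, ∃ x ∈ unitCube d, f i x = y) :
    ∃ (K : Set ellInfty) (F : Eucl d → ellInfty),
      IsCompact K ∧ LipschitzOnWith 1 F (unitCube d) ∧ F '' unitCube d = K ∧
      ∃ φ : ℕ → ℕ, StrictMono φ ∧
        ∃ ι : ∀ k : ℕ, Y (φ k) → ellInfty,
          (∀ k, Isometry (ι k)) ∧
          (∀ ε > (0:ℝ), ∃ N : ℕ, ∀ k ≥ N, ∀ x ∈ unitCube d,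
            ‖ι k (f (φ k) x) - F x‖ < ε) ∧
          (∀ ε > (0:ℝ), ∃ N : ℕ, ∀ k ≥ N, approxDist (f (φ k)) F ε) :=
  lipschitz_maps_compactness_general d Y f hf honto
end
end
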